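/- In the universal associative envelope 𝔄 the following identities hold: (i) e_{11}³e_{1i} = e_{11}e_{1i} for all i ≠ 1; (ii) e_{11}³e_{i1} = −e_{11}e_{i1} for all i ≠ 1; (iii) e_{11}⁵ = e_{11}. -/
import Mathlib

noncomputable section

/-- The defining relations of the universal associative envelope of the anti-Jordan
triple system of `n × n` matrices: `x_{ij}x_{kl}x_{mt} - x_{mt}x_{kl}x_{ij}
- δ_{jk}δ_{lm} x_{it} + δ_{tk}δ_{li} x_{mj} ~ 0`.  (Index `1` of the paper is `0 : Fin n`.) -/
def ajtsRel (F : Type*) [Field F] (n : ℕ) :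
    FreeAlgebra F (Fin n × Fin n) → FreeAlgebra F (Fin n × Fin n) → Prop :=
  fun a b => b = 0 ∧ ∃ i j k l m t : Fin n,
    a = FreeAlgebra.ι F (i, j) * FreeAlgebra.ι F (k, l) * FreeAlgebra.ι F (m, t)
        - FreeAlgebra.ι F (m, t) * FreeAlgebra.ι F (k, l) * FreeAlgebra.ι F (i, j)
        - (if j = k ∧ l = m then FreeAlgebra.ι F (i, t) else 0)
        + (if t = k ∧ l = i then FreeAlgebra.ι F (m, j) else 0)

/-- The universal associative envelope `𝔄 = F⟨X⟩/I` of the anti-Jordan triple system of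
`n × n` matrices with product `⟨a,b,c⟩ = abc - cba`. -/
abbrev Env (F : Type*) [Field F] (n : ℕ) := RingQuot (ajtsRel F n)

/-- The image `e_{ij}` of the generator `x_{ij}` in the universal envelope `𝔄`. -/
def gen (F : Type*) [Field F] (n : ℕ) (i j : Fin n) : Env F n :=
  RingQuot.mkAlgHom F (ajtsRel F n) (FreeAlgebra.ι F (i, j))

set_option maxHeartbeats 2000000 in
theorem abstract_lemma {R : Type*} [Ring R] (A B C D : R)
    (hcancel : ∀ z : R, 4 * z = 0 → z = 0)
    (h0 : A * A * B - B * A * A - B = 0)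
    (h1 : A * A * C - C * A * A + C = 0)
    (h2 : A * A * D - D * A * A = 0)
    (h3 : A * B * B - B * B * A = 0)
    (h4 : A * B * C - C * B * A - A = 0)
    (h5 : A * B * D - D * B * A - B = 0)
    (h6 : A * C * B - B * C * A + A = 0)
    (h7 : A * C * C - C * C * A = 0)
    (h8 : A * C * D - D * C * A + C = 0)
    (h9 : A * D * B - B * D * A = 0)
    (h10 : A * D * C - C * D * A = 0)
    (h11 : B * A * C - C * A * B + D = 0)
    (h12 : B * A * D - D * A * B = 0)
    (h13 : B * B * D - D * B * B = 0)
    (h14 : B * C * D - D * C * B + D = 0)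
    (h15 : B * D * C - C * D * B - A = 0)
    : A ^ 3 * B = A * B ∧ A ^ 3 * C = -(A * C) ∧ A ^ 5 = A := by
  refine ⟨?_, ?_, ?_⟩
  · have key : 4 * (A ^ 3 * B - A * B) =
      (-2) * ((A * D * B - B * D * A) * A)
      + (-2) * (A * (A * B * D - D * B * A - B))
      + 1 * (A * (A * B * B - B * B * A) * C * D)
      + 2 * ((B * C * D - D * C * B + D) * B * A * D)
      + (-2) * (D * C * (A * B * B - B * B * A) * D)
      + 2 * (B * C * (A * B * D - D * B * A - B) * D)
      + (-2) * (D * (B * A * C - C * A * B + D) * B * D)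
      + (-2) * (D * D * (A * A * B - B * A * A - B) * D)
      + 2 * (D * (A * B * D - D * B * A - B) * A * D)
      + (-2) * (D * (A * A * D - D * A * A) * B * D)
      + 2 * (D * A * (A * D * B - B * D * A) * D)
      + 2 * (B * (B * A * C - C * A * B + D) * D * D)
      + 2 * ((A * A * B - B * A * A - B) * D * D * D)
      + (-2) * ((A * D * B - B * D * A) * A * D * D)
      + 2 * (B * (A * A * D - D * A * A) * D * D)
      + (-2) * (A * (A * B * D - D * B * A - B) * D * D)
      + (-2) * ((B * B * D - D * B * B) * C * A * D)
      + 2 * (D * B * (A * C * B - B * C * A + A) * D)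
      + (-2) * (B * B * (A * C * D - D * C * A + C) * D)
      + (-1) * ((A * A * B - B * A * A - B) * B * C * D)
      + 2 * (B * C * (A * D * B - B * D * A) * A)
      + (-2) * (B * C * B * (A * A * D - D * A * A))
      + (-2) * (B * C * (A * A * B - B * A * A - B) * D)
      + 2 * (B * C * A * (A * B * D - D * B * A - B))
      + 1 * ((A * B * B - B * B * A) * A * C * D)
      + (-1) * (B * (A * A * B - B * A * A - B) * C * D)
      + (-4) * (A * (A * D * B - B * D * A) * A * D)
      + (-4) * ((A * B * D - D * B * A - B) * A * A * D)
      + (-2) * ((A * B * D - D * B * A - B) * D)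
      + 4 * (D * (A * A * B - B * A * A - B) * A * D)
      + 4 * ((A * A * D - D * A * A) * B * A * D)
      + 2 * ((A * A * B - B * A * A - B) * D)
      + (-2) * ((A * C * B - B * C * A + A) * B)
      + (-2) * (B * (A * A * D - D * A * A))
      + 1 * (A * C * A * (A * B * B - B * B * A))
      + 1 * (A * C * (A * B * B - B * B * A) * A)
      + (-1) * (A * C * B * (A * A * B - B * A * A - B))
      + (-1) * (A * C * (A * A * B - B * A * A - B) * B)
      + (-4) * ((A * D * B - B * D * A) * A * A * A)
      + 4 * (B * (A * A * D - D * A * A) * A * A)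
      + 4 * ((A * A * B - B * A * A - B) * D * A * A)
      + (-4) * (A * (A * B * D - D * B * A - B) * A * A)
      + 4 * (A * (A * A * B - B * A * A - B)) := by noncomm_ring
    simp only [h0, h1, h2, h3, h4, h5, h6, h7, h8, h9, h10, h11, h12, h13, h14, h15, mul_zero, zero_mul, add_zero, zero_add] at key
    have := hcancel _ key
    exact sub_eq_zero.mp this
  · have key : 4 * (A ^ 3 * C - -(A * C)) =
      (-2) * ((A * D * C - C * D * A) * A)
      + 2 * (A * (B * C * D - D * C * B + D) * C * A)
      + (-2) * (A * D * C * (A * C * B - B * C * A + A))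
      + (-2) * (C * (B * A * D - D * A * B) * C * A)
      + (-2) * (C * D * (A * B * C - C * B * A - A) * A)
      + 2 * (C * D * C * (A * A * B - B * A * A - B))
      + 2 * (C * D * (A * A * C - C * A * A + C) * B)
      + (-2) * ((A * B * C - C * B * A - A) * D * C * A)
      + 2 * ((A * D * C - C * D * A) * A * C * B)
      + 4 * ((A * D * C - C * D * A) * A * A * A)
      + (-4) * (C * (A * A * D - D * A * A) * A * A)
      + (-4) * ((A * A * C - C * A * A + C) * D * A * A)
      + 4 * (A * (A * C * D - D * C * A + C) * A * A)
      + 4 * (A * (A * A * C - C * A * A + C)) := by noncomm_ring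
    simp only [h0, h1, h2, h3, h4, h5, h6, h7, h8, h9, h10, h11, h12, h13, h14, h15, mul_zero, zero_mul, add_zero, zero_add] at key
    have := hcancel _ key
    exact sub_eq_zero.mp this
  · have key : 4 * (A ^ 5 - A) =
      (-4) * ((B * D * C - C * D * B - A) * A * A * A * A)
      + 16 * (C * D * (A * A * B - B * A * A - B) * A * A)
      + 4 * (C * D * (A * A * B - B * A * A - B))
      + 4 * ((A * A * C - C * A * A + C) * D * B)
      + 16 * (C * D * A * A * (A * A * B - B * A * A - B))
      + 14 * ((A * A * C - C * A * A + C) * D * A * A * B)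
      + 30 * (C * (A * A * D - D * A * A) * A * A * B)
      + 2 * (C * (A * A * D - D * A * A) * B)
      + (-12) * ((A * A * B - B * A * A - B) * D * A * A * C)
      + (-12) * (B * (A * A * D - D * A * A) * A * A * C)
      + (-6) * (B * D * (A * A * C - C * A * A + C))
      + (-6) * ((A * A * B - B * A * A - B) * D * C)
      + 4 * ((B * C * D - D * C * B + D) * B * A * C * A)
      + (-4) * (D * C * (A * B * B - B * B * A) * C * A)
      + (-4) * (D * C * A * B * (A * C * B - B * C * A + A))
      + (-4) * ((A * C * D - D * C * A + C) * B * A * C * B)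
      + 2 * ((A * C * D - D * C * A + C) * B * A)
      + (-8) * ((A * B * D - D * B * A - B) * C * A)
      + (-4) * ((A * B * C - C * B * A - A) * C * B)
      + 4 * (B * C * (A * B * D - D * B * A - B) * C * A)
      + 4 * ((A * C * B - B * C * A + A) * B * D * C * A)
      + (-8) * (B * C * (A * C * B - B * C * A + A))
      + (-8) * ((A * C * B - B * C * A + A) * C * B)
      + 22 * ((A * C * B - B * C * A + A))
      + (-4) * (A * C * (A * B * D - D * B * A - B) * C * B)
      + 4 * (A * C * B * B * (A * C * D - D * C * A + C))
      + 4 * (A * C * (A * B * B - B * B * A) * C * D)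
      + (-4) * (A * (B * A * C - C * A * B + D) * D * C * B)
      + 4 * (A * D * D * (A * A * C - C * A * A + C) * B)
      + (-4) * (A * D * (A * C * D - D * C * A + C) * A * B)
      + 4 * (A * D * (A * A * D - D * A * A) * C * B)
      + (-4) * (A * (A * C * D - D * C * A + C) * B)
      + (-4) * (A * D * A * (A * D * C - C * D * A) * B)
      + 4 * (A * (B * A * C - C * A * B + D) * B * C * D)
      + (-4) * (A * (A * B * D - D * B * A - B) * A * C * D)
      + 14 * (A * C * A * (A * B * B - B * B * A) * C)
      + 14 * (A * C * (A * B * B - B * B * A) * A * C)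
      + (-14) * (A * C * B * (A * A * B - B * A * A - B) * C)
      + (-14) * (A * C * (A * A * B - B * A * A - B) * B * C)
      + (-2) * (A * C * A * (A * D * B - B * D * A) * A)
      + 4 * (C * B * (A * C * B - B * C * A + A))
      + 2 * (C * A * (A * B * B - B * B * A) * C * A)
      + 2 * (C * (A * B * B - B * B * A) * A * C * A)
      + (-2) * (C * B * (A * A * B - B * A * A - B) * C * A)
      + (-2) * (C * (A * A * B - B * A * A - B) * B * C * A)
      + (-4) * ((B * B * D - D * B * B) * C * A * C * A)
      + 4 * (D * B * (A * C * B - B * C * A + A) * C * A)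
      + 4 * ((A * B * D - D * B * A - B) * C * B * C * A)
      + (-4) * (B * B * (A * C * D - D * C * A + C) * C * A)
      + (-2) * ((A * A * B - B * A * A - B) * B * C * C * A)
      + (-4) * ((A * B * B - B * B * A) * C * D * C * A)
      + 2 * ((A * B * B - B * B * A) * A * C * C * A)
      + (-2) * (B * (A * A * B - B * A * A - B) * C * C * A)
      + 4 * ((A * D * C - C * D * A) * A * B * C * B)
      + (-8) * (C * (A * A * D - D * A * A) * B * C * B)
      + 4 * (C * A * (A * D * B - B * D * A) * C * B)
      + 4 * (C * (A * B * D - D * B * A - B) * A * C * B)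
      + (-4) * ((A * A * C - C * A * A + C) * D * B * C * B)
      + (-4) * (C * D * (A * A * B - B * A * A - B) * C * B)
      + 4 * (A * (A * C * D - D * C * A + C) * B * C * B)
      + 4 * (A * B * D * C * (A * C * B - B * C * A + A))
      + 4 * (A * B * (A * C * D - D * C * A + C) * C * B)
      + (-4) * (A * B * B * C * (A * C * D - D * C * A + C))
      + (-4) * (A * B * (A * C * B - B * C * A + A) * C * D)
      + 2 * (A * (A * B * B - B * B * A) * C * C * A)
      + 16 * (B * A * (A * C * C - C * C * A) * B * A)
      + 16 * (B * (A * C * C - C * C * A) * A * B * A)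
      + (-16) * (B * C * (A * A * C - C * A * A + C) * B * A)
      + (-16) * (B * (A * A * C - C * A * A + C) * C * B * A)
      + (-32) * (B * C * (A * B * C - C * B * A - A))
      + (-32) * ((A * C * B - B * C * A + A) * B * C)
      + 2 * (A * (A * B * B - B * B * A) * A * C * C)
      + (-16) * (A * (A * D * B - B * D * A) * A * C * A)
      + (-6) * ((B * A * C - C * A * B + D) * D * A)
      + (-6) * (D * D * (A * D * B - B * D * A) * A * C)
      + 6 * (D * D * B * (A * A * D - D * A * A) * C)
      + 6 * (D * (A * B * D - D * B * A - B) * A * D * C)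
      + (-6) * (D * D * A * (A * B * D - D * B * A - B) * C)
      + 6 * (D * (A * C * D - D * C * A + C) * A * B * A)
      + (-6) * (D * D * (A * B * C - C * B * A - A))
      + (-6) * (D * D * (A * A * C - C * A * A + C) * B * A)
      + (-6) * (D * (A * A * D - D * A * A) * C * B * A)
      + (-6) * (D * (A * A * D - D * A * A) * B * D * C)
      + 6 * (D * A * (A * D * C - C * D * A) * B * A)
      + 6 * (D * A * (A * D * B - B * D * A) * D * C)
      + (-20) * (C * (A * B * D - D * B * A - B) * A)
      + 26 * ((A * B * C - C * B * A - A))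
      + 6 * (B * (A * C * D - D * C * A + C) * A)
      + 6 * ((A * D * B - B * D * A) * A * C)
      + 6 * (A * (A * B * D - D * B * A - B) * C)
      + 6 * (A * (A * D * B - B * D * A) * A * D * C)
      + 6 * ((A * B * D - D * B * A - B) * A * A * D * C)
      + (-6) * (D * (A * A * B - B * A * A - B) * A * D * C)
      + (-6) * ((A * A * D - D * A * A) * B * A * D * C)
      + (-16) * ((A * B * D - D * B * A - B) * A * A * C * A)
      + 16 * (D * (A * A * B - B * A * A - B) * A * C * A)
      + 16 * ((A * A * D - D * A * A) * B * A * C * A)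
      + 12 * ((A * A * B - B * A * A - B) * C * A)
      + (-16) * (C * A * (A * D * B - B * D * A) * A * A)
      + (-16) * (C * A * A * D * (A * A * B - B * A * A - B))
      + (-12) * (C * (A * B * D - D * B * A - B) * A * A * A)
      + 12 * ((A * B * C - C * B * A - A) * A * A)
      + 12 * (A * B * (A * A * C - C * A * A + C))
      + (-4) * ((A * D * B - B * D * A) * A * A * C * D)
      + 4 * (B * (A * A * D - D * A * A) * A * C * D)
      + (-4) * ((A * D * B - B * D * A) * C * D)
      + 4 * ((A * A * B - B * A * A - B) * D * A * C * D)
      + 2 * ((A * B * B - B * B * A) * A * A * C * C)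
      + (-2) * (B * (A * A * B - B * A * A - B) * A * C * C)
      + (-2) * ((A * A * B - B * A * A - B) * B * A * C * C)
      + 4 * ((A * B * B - B * B * A) * C * C)
      + 12 * ((A * D * B - B * D * A) * A * A * A * C)
      + (-12) * (A * (A * B * C - C * B * A - A) * A)
      + 14 * (A * C * (A * A * B - B * A * A - B))
      + 12 * (A * (A * B * D - D * B * A - B) * A * A * C)
      + (-2) * (A * C * (A * B * D - D * B * A - B) * A * A)
      + 2 * (A * C * D * (A * A * B - B * A * A - B) * A)
      + 2 * (A * C * (A * A * D - D * A * A) * B * A)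
      + (-14) * ((A * D * C - C * D * A) * A * A * A * B)
      + (-14) * (C * A * (A * D * B - B * D * A))
      + (-14) * (A * (A * C * D - D * C * A + C) * A * A * B)
      + (-2) * ((B * C * D - D * C * B + D) * A * A * D * A)
      + 4 * ((B * A * C - C * A * B + D) * A * A * D * A)
      + 4 * (C * A * B * (A * A * D - D * A * A) * A)
      + (-4) * (B * (A * C * D - D * C * A + C) * A * A * A)
      + (-4) * (B * A * C * (A * A * D - D * A * A) * A)
      + (-4) * (B * (A * A * C - C * A * A + C) * A)
      + 2 * ((B * A * D - D * A * B) * C * A * D * A)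
      + 2 * (D * (A * B * C - C * B * A - A) * A * D * A)
      + (-2) * (B * (A * D * C - C * D * A) * A * D * A) := by noncomm_ring
    simp only [h0, h1, h2, h3, h4, h5, h6, h7, h8, h9, h10, h11, h12, h13, h14, h15, mul_zero, zero_mul, add_zero, zero_add] at key
    have := hcancel _ key
    exact sub_eq_zero.mp this

lemma rel_eq (F : Type*) [Field F] (n : ℕ) (i j k l m t : Fin n) :
    gen F n i j * gen F n k l * gen F n m t - gen F n m t * gen F n k l * gen F n i j
      - (if j = k ∧ l = m then gen F n i t else 0)
      + (if t = k ∧ l = i then gen F n m j else 0) = 0 := by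
  have hrel : ajtsRel F n
      (FreeAlgebra.ι F (i, j) * FreeAlgebra.ι F (k, l) * FreeAlgebra.ι F (m, t)
        - FreeAlgebra.ι F (m, t) * FreeAlgebra.ι F (k, l) * FreeAlgebra.ι F (i, j)
        - (if j = k ∧ l = m then FreeAlgebra.ι F (i, t) else 0)
        + (if t = k ∧ l = i then FreeAlgebra.ι F (m, j) else 0)) 0 :=
    ⟨rfl, i, j, k, l, m, t, rfl⟩
  have h := RingQuot.mkAlgHom_rel F hrel
  simp only [map_add, map_sub, map_mul, map_zero,
    apply_ite (RingQuot.mkAlgHom F (ajtsRel F n))] at h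
  simpa [gen] using h

lemma four_cancel (F : Type*) [Field F] [CharZero F] (n : ℕ) (z : Env F n)
    (h : 4 * z = 0) : z = 0 := by
  have h4 : ((4 : F) • z) = 0 := by
    rw [Algebra.smul_def, map_ofNat]; exact h
  have h2 : ((4 : F)⁻¹ • ((4 : F) • z)) = 0 := by rw [h4, smul_zero]
  rwa [smul_smul, inv_mul_cancel₀ (by norm_num : (4 : F) ≠ 0), one_smul] at h2

/-- In `𝔄`: (i) `e_{11}³e_{1i} = e_{11}e_{1i}` for `i ≠ 1`;
(ii) `e_{11}³e_{i1} = -(e_{11}e_{i1})` for `i ≠ 1`; (iii) `e_{11}⁵ = e_{11}`. -/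
theorem envelope_G17_G18_G19 (F : Type*) [Field F] [IsAlgClosed F] [CharZero F]
    (n : ℕ) [NeZero n] (hn : 2 ≤ n) :
    (∀ i : Fin n, i ≠ 0 →
      gen F n 0 0 ^ 3 * gen F n 0 i = gen F n 0 0 * gen F n 0 i) ∧
    (∀ i : Fin n, i ≠ 0 →
      gen F n 0 0 ^ 3 * gen F n i 0 = -(gen F n 0 0 * gen F n i 0)) ∧
    gen F n 0 0 ^ 5 = gen F n 0 0 := by
  have key : ∀ i : Fin n, i ≠ 0 →
      gen F n 0 0 ^ 3 * gen F n 0 i = gen F n 0 0 * gen F n 0 i ∧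
      gen F n 0 0 ^ 3 * gen F n i 0 = -(gen F n 0 0 * gen F n i 0) ∧
      gen F n 0 0 ^ 5 = gen F n 0 0 := by
    intro i hi
    have rel : ∀ j₁ j₂ j₃ j₄ j₅ j₆ : Fin n, _ := fun j₁ j₂ j₃ j₄ j₅ j₆ =>
      rel_eq F n j₁ j₂ j₃ j₄ j₅ j₆
    refine abstract_lemma (gen F n 0 0) (gen F n 0 i) (gen F n i 0) (gen F n i i)
      (four_cancel F n) 
      (by simpa [hi, Ne.symm hi] using rel 0 0 0 0 0 i) (by simpa [hi, Ne.symm hi] using rel 0 0 0 0 i 0) (by simpa [hi, Ne.symm hi] using rel 0 0 0 0 i i) (by simpa [hi, Ne.symm hi] using rel 0 0 0 i 0 i) (by simpa [hi, Ne.symm hi] using rel 0 0 0 i i 0) (by simpa [hi, Ne.symm hi] using rel 0 0 0 i i i) (by simpa [hi, Ne.symm hi] using rel 0 0 i 0 0 i) (by simpa [hi, Ne.symm hi] using rel 0 0 i 0 i 0) (by simpa [hi, Ne.symm hi] using rel 0 0 i 0 i i) (by simpa [hi, Ne.symm hi] using rel 0 0 i i 0 i) (by simpa [hi, Ne.symm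 hi] using rel 0 0 i i i 0) (by simpa [hi, Ne.symm hi] using rel 0 i 0 0 i 0) (by simpa [hi, Ne.symm hi] using rel 0 i 0 0 i i) (by simpa [hi, Ne.symm hi] using rel 0 i 0 i i i) (by simpa [hi, Ne.symm hi] using rel 0 i i 0 i i) (by simpa [hi, Ne.symm hi] using rel 0 i i i i 0)
  refine ⟨fun i hi => (key i hi).1, fun i hi => (key i hi).2.1, ?_⟩
  have h1 : (⟨1, hn⟩ : Fin n) ≠ 0 := by
    intro h
    have := congrArg Fin.val h
    simp [Fin.val_zero] at this
  exact (key ⟨1, hn⟩ h1).2.2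

end
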